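/- arXiv:2303.10592 — 3 statements merged into one kernel-verified Lean document; each statement's English description precedes it below -/
import Mathlib

section
/- For the graded-mesh L1 coefficients, the leading coefficients decrease with the time level: a_1^{(1,α)} > a_1^{(2,α)} > ... > a_1^{(M,α)} ≥ T^{-α}. -/
/-!
With `p = 1 - α` and `h = τ₁`, the leading coefficient is `a₁⁽ⁿ⁾ = (τₙ ^ p - (τₙ - h) ^ p) / (p h)`,
an increment of the strictly concave function `x ↦ x ^ p` over a window of fixed width `h`. Such
increments strictly decrease as the window moves right, and since `τₙ` increases with `n` so does
`a₁⁽ⁿ⁾`. At the last level `τ_M = T`, and the increment over `[T - h, T]` is at least `h` times the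
derivative `p T ^ (p - 1)` at the right endpoint, which gives `a₁⁽ᴹ⁾ ≥ T ^ (-α)`.
-/

open Real Set

noncomputable def gradedMesh (T γ : ℝ) (M k : ℕ) : ℝ := T * ((k : ℝ) / M) ^ γ

section GradedMesh

variable {T γ : ℝ} {M : ℕ}

lemma gradedMesh_zero (hγ : 0 < γ) : gradedMesh T γ M 0 = 0 := by
  simp [gradedMesh, zero_rpow hγ.ne']

lemma gradedMesh_self (hM : M ≠ 0) : gradedMesh T γ M M = T := by
  simp [gradedMesh, hM]

lemma gradedMesh_strictMono (hT : 0 < T) (hγ : 0 < γ) (hM : M ≠ 0) :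
    StrictMono (gradedMesh T γ M) := by
  intro m n hmn
  have hM0 : (0 : ℝ) < M := by positivity
  have hdiv : (m : ℝ) / M < n / M := div_lt_div_of_pos_right (by exact_mod_cast hmn) hM0
  exact mul_lt_mul_of_pos_left (rpow_lt_rpow (by positivity) hdiv hγ) hT

end GradedMesh

lemma StrictConcaveOn.sub_shift_lt {𝕜 : Type*} [Field 𝕜] [LinearOrder 𝕜] [IsStrictOrderedRing 𝕜]
    {s : Set 𝕜} {f : 𝕜 → 𝕜} (hf : StrictConcaveOn 𝕜 s f) {h x y : 𝕜} (hh : 0 < h)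
    (hx : x - h ∈ s) (hy : y ∈ s) (hxy : x < y) :
    f y - f (y - h) < f x - f (x - h) := by
  have hx' : x ∈ s := hf.1.ordConnected.out hx hy ⟨by linarith, hxy.le⟩
  have hy' : y - h ∈ s := hf.1.ordConnected.out hx hy ⟨by linarith, by linarith⟩
  -- Pass from `[y - h, y]` to `[x - h, y]` and then to `[x - h, x]`, moving one endpoint at a time.
  have hleft := hf.secant_strict_mono hy hx hy' (by linarith) (by linarith) (by linarith)
  have hright := hf.secant_strict_mono hx hx' hy (by linarith) (by linarith) hxy
  rw [← neg_div_neg_eq (f (y - h) - f y), ← neg_div_neg_eq (f (x - h) - f y)] at hleft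
  simp only [neg_sub, sub_sub_cancel] at hleft hright
  have := hleft.trans hright
  rwa [div_lt_div_iff_of_pos_right hh] at this

lemma Real.rpow_sub_one_le_rpow_sub_rpow_div {p x h : ℝ} (hp₀ : 0 < p) (hp₁ : p ≤ 1) (hh : 0 < h)
    (hhx : h ≤ x) : x ^ (p - 1) ≤ (x ^ p - (x - h) ^ p) / (p * h) := by
  have hx : 0 < x := hh.trans_le hhx
  have hslope := (concaveOn_rpow hp₀.le hp₁).le_slope_of_hasDerivAt (x := x - h) (y := x)
    (sub_nonneg.2 hhx) hx.le (by linarith) (hasDerivAt_rpow_const (Or.inl hx.ne'))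
  rw [slope_def_field, sub_sub_cancel] at hslope
  rw [le_div_iff₀ (by positivity)]
  rw [le_div_iff₀ hh] at hslope
  linarith

/-- The leading graded-mesh L1 coefficients decrease with the time level:
`a_1^{(1,α)} > a_1^{(2,α)} > ⋯ > a_1^{(M,α)} ≥ T^{-α}`. -/
theorem graded_L1_first_coeff_decreasing
    (α T γ : ℝ) (M : ℕ) (hα0 : 0 < α) (hα1 : α < 1) (hT : 0 < T) (hγ : 1 ≤ γ)
    (hM : 1 ≤ M)
    (τ : ℕ → ℝ) (hτ : ∀ k, τ k = T * ((k : ℝ) / (M : ℝ)) ^ γ)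
    (a : ℕ → ℕ → ℝ)
    (ha : ∀ n k, a n k =
      ((τ n - τ (k - 1)) ^ (1 - α) - (τ n - τ k) ^ (1 - α)) /
        ((1 - α) * (τ k - τ (k - 1)))) :
    (∀ n, 1 ≤ n → n < M → a (n + 1) 1 < a n 1) ∧ T ^ (-α) ≤ a M 1 := by
  obtain rfl : τ = gradedMesh T γ M := funext hτ
  have hγ0 : 0 < γ := by linarith
  have hM0 : M ≠ 0 := by omega
  have hmono := gradedMesh_strictMono hT hγ0 hM0
  set p := 1 - α
  set h := gradedMesh T γ M 1
  have hh : 0 < h := gradedMesh_zero (T := T) (M := M) hγ0 ▸ hmono zero_lt_one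
  have ha1 (n : ℕ) : a n 1 = (gradedMesh T γ M n ^ p - (gradedMesh T γ M n - h) ^ p) / (p * h) := by
    rw [ha, Nat.sub_self, gradedMesh_zero hγ0, sub_zero, sub_zero]
  have hp₀ : 0 < p := by linarith
  refine ⟨fun n hn _ => ?_, ?_⟩
  · rw [ha1, ha1]
    refine div_lt_div_of_pos_right ?_ (by positivity)
    exact (strictConcaveOn_rpow hp₀ (by linarith)).sub_shift_lt hh
      (sub_nonneg.2 (hmono.monotone hn)) (hh.trans (hmono (by omega))).le (hmono n.lt_succ_self)
  · rw [ha1, gradedMesh_self hM0, show -α = p - 1 by ring]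
    exact rpow_sub_one_le_rpow_sub_rpow_div hp₀ (by linarith) hh
      (gradedMesh_self (T := T) (γ := γ) hM0 ▸ hmono.monotone hM)
end

section
/- Suppose nonnegative real numbers E_0, E_1, ..., E_M, nonnegative numbers g_1,...,g_M, and for each n coefficients satisfying 0 < a_1^{(n)} < a_2^{(n)} < ... < a_n^{(n)}, such that a_n^{(n)} E_n ≤ Σ_{k=1}^{n-1} (a_{k+1}^{(n)} − a_k^{(n)}) E_k + a_1^{(n)} (E_0 + g_n / a_1^{(n)}) for all 1 ≤ n ≤ M. Then E_n ≤ E_0 + max_{1≤m≤n} g_m / a_1^{(m)} for all 1 ≤ n ≤ M. -/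
open Finset

theorem sum_Icc_one_pred_sub {G : Type*} [AddCommGroup G] (f : ℕ → G) {n : ℕ} (hn : 1 ≤ n) :
    ∑ k ∈ Icc 1 (n - 1), (f (k + 1) - f k) = f n - f 1 := by
  rw [← Ico_add_one_right_eq_Icc, Nat.sub_add_cancel hn, sum_Ico_sub f hn]

/-- Since the weights `a (k + 1) - a k` and `a 1` are nonnegative and telescope to `a n`, the
right-hand side is a weighted average of values bounded by `B`, with total weight `a n`. -/
theorem le_of_mul_le_sum_sub_mul {a E : ℕ → ℝ} {n : ℕ} {B c : ℝ} (hn : 1 ≤ n) (ha : 0 < a 1)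
    (hmono : ∀ k ∈ Icc 1 (n - 1), a k ≤ a (k + 1)) (hE : ∀ k ∈ Icc 1 (n - 1), E k ≤ B)
    (hc : c ≤ B) (h : a n * E n ≤ ∑ k ∈ Icc 1 (n - 1), (a (k + 1) - a k) * E k + a 1 * c) :
    E n ≤ B := by
  have hweights : ∀ k ∈ Icc 1 (n - 1), 0 ≤ a (k + 1) - a k := fun k hk ↦ sub_nonneg.2 (hmono k hk)
  have hsum : ∑ k ∈ Icc 1 (n - 1), (a (k + 1) - a k) * E k ≤ (a n - a 1) * B := by
    rw [← sum_Icc_one_pred_sub a hn, sum_mul]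
    exact sum_le_sum fun k hk ↦ mul_le_mul_of_nonneg_left (hE k hk) (hweights k hk)
  have han : a 1 ≤ a n := by
    rw [← sub_nonneg, ← sum_Icc_one_pred_sub a hn]
    exact sum_nonneg hweights
  refine le_of_mul_le_mul_left ?_ (ha.trans_le han)
  nlinarith [mul_le_mul_of_nonneg_left hc ha.le]

theorem discrete_L1_stability_general
    (M : ℕ) (E g : ℕ → ℝ) (a : ℕ → ℕ → ℝ)
    (hapos : ∀ n, 1 ≤ n → n ≤ M → 0 < a n 1)
    (hainc : ∀ n, 1 ≤ n → n ≤ M → ∀ k, 1 ≤ k → k < n → a n k < a n (k + 1))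
    (hrec : ∀ n, 1 ≤ n → n ≤ M →
      a n n * E n ≤ (∑ k ∈ Icc 1 (n - 1), (a n (k + 1) - a n k) * E k) +
        a n 1 * (E 0 + g n / a n 1)) :
    ∀ n, (hn : 1 ≤ n) → n ≤ M →
      E n ≤ E 0 + (Icc 1 n).sup' (Finset.nonempty_Icc.mpr hn)
        (fun m => g m / a m 1) := by
  intro n
  induction n using Nat.strong_induction_on with
  | _ n ih =>
  intro hn hnM
  refine le_of_mul_le_sum_sub_mul hn (hapos n hn hnM) (fun k hk ↦ ?_) (fun k hk ↦ ?_) ?_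
    (hrec n hn hnM)
  · obtain ⟨hk1, hkn⟩ := mem_Icc.1 hk
    exact (hainc n hn hnM k hk1 (by omega)).le
  · obtain ⟨hk1, hkn⟩ := mem_Icc.1 hk
    exact (ih k (by omega) hk1 (by omega)).trans
      (add_le_add_right (sup'_mono _ (Icc_subset_Icc_right (by omega)) _) _)
  · exact add_le_add_right (le_sup' (fun m ↦ g m / a m 1) (right_mem_Icc.2 hn)) _

/-- Discrete stability inequality: if
`a_n^{(n)} E_n ≤ Σ_{k=1}^{n-1}(a_{k+1}^{(n)} − a_k^{(n)}) E_k + a_1^{(n)}(E_0 + g_n/a_1^{(n)})`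
with positive strictly increasing coefficients, then
`E_n ≤ E_0 + max_{1≤m≤n} g_m / a_1^{(m)}`. -/
theorem discrete_L1_stability
    (M : ℕ) (hM : 1 ≤ M) (E g : ℕ → ℝ) (a : ℕ → ℕ → ℝ)
    (hE : ∀ n, n ≤ M → 0 ≤ E n) (hg : ∀ n, 1 ≤ n → n ≤ M → 0 ≤ g n)
    (hapos : ∀ n, 1 ≤ n → n ≤ M → 0 < a n 1)
    (hainc : ∀ n, 1 ≤ n → n ≤ M → ∀ k, 1 ≤ k → k < n → a n k < a n (k + 1))
    (hrec : ∀ n, 1 ≤ n → n ≤ M →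
      a n n * E n ≤ (∑ k ∈ Icc 1 (n - 1), (a n (k + 1) - a n k) * E k) +
        a n 1 * (E 0 + g n / a n 1)) :
    ∀ n, (hn : 1 ≤ n) → n ≤ M →
      E n ≤ E 0 + (Icc 1 n).sup' (Finset.nonempty_Icc.mpr hn)
        (fun m => g m / a m 1) :=
  discrete_L1_stability_general M E g a hapos hainc hrec
end

section
/- Suppose nonnegative reals E_n satisfy the fast-scheme stability recursion b_n^{(n)} E_n ≤ Σ_{k=1}^{n-1}(b_{k+1}^{(n)} − b_k^{(n)}) E_k + b_1^{(n)}(E_0 + g_n/b_1^{(n)}) where 0 < b_1^{(n)} < ... < b_{n-1}^{(n)} ≤ b_n^{(n)}. Then E_n ≤ E_0 + max_{1≤m≤n} g_m/b_1^{(m)}. -/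
open Finset

/- Each `E n` is bounded by a weighted average of the earlier `E k` and of `E 0 + g n / b n 1`:
the weights `b n (k + 1) - b n k` are nonnegative by monotonicity of `b n`, and together with
`b n 1` they telescope to `b n n`. Strong induction on `n` then propagates the bound. -/

theorem le_of_mul_le_sum_mul_add_mul {K ι : Type*} [Field K] [LinearOrder K]
    [IsStrictOrderedRing K] {s : Finset ι} {w y : ι → K} {c z x C : K}
    (hw : ∀ i ∈ s, 0 ≤ w i) (hc : 0 < c) (hy : ∀ i ∈ s, y i ≤ C) (hz : z ≤ C)
    (h : (∑ i ∈ s, w i + c) * x ≤ ∑ i ∈ s, w i * y i + c * z) : x ≤ C := by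
  have hsum : ∑ i ∈ s, w i * y i ≤ (∑ i ∈ s, w i) * C := by
    rw [sum_mul]
    exact sum_le_sum fun i hi => mul_le_mul_of_nonneg_left (hy i hi) (hw i hi)
  have hpos : 0 < ∑ i ∈ s, w i + c := add_pos_of_nonneg_of_pos (sum_nonneg hw) hc
  refine le_of_mul_le_mul_left ?_ hpos
  calc (∑ i ∈ s, w i + c) * x ≤ ∑ i ∈ s, w i * y i + c * z := h
    _ ≤ (∑ i ∈ s, w i) * C + c * C := add_le_add hsum (mul_le_mul_of_nonneg_left hz hc.le)
    _ = (∑ i ∈ s, w i + c) * C := by ring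

theorem le_add_one_of_mem_Ico_of_lt_of_le_last {f : ℕ → ℝ} {n : ℕ}
    (hinc : ∀ k, 1 ≤ k → k + 1 ≤ n - 1 → f k < f (k + 1))
    (hlast : 2 ≤ n → f (n - 1) ≤ f n) :
    ∀ k ∈ Ico 1 n, f k ≤ f (k + 1) := by
  intro k hk
  rw [mem_Ico] at hk
  rcases Nat.lt_or_ge (k + 1) n with hlt | hge
  · exact (hinc k hk.1 (by omega)).le
  · obtain rfl : n = k + 1 := by omega
    exact hlast (by omega)

theorem fast_discrete_stability_general
    (M : ℕ) (E g : ℕ → ℝ) (b : ℕ → ℕ → ℝ)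
    (hbpos : ∀ n, 1 ≤ n → n ≤ M → 0 < b n 1)
    (hbinc : ∀ n, 1 ≤ n → n ≤ M → ∀ k, 1 ≤ k → k + 1 ≤ n - 1 →
      b n k < b n (k + 1))
    (hbdiag : ∀ n, 2 ≤ n → n ≤ M → b n (n - 1) ≤ b n n)
    (hrec : ∀ n, 1 ≤ n → n ≤ M →
      b n n * E n ≤ (∑ k ∈ Icc 1 (n - 1), (b n (k + 1) - b n k) * E k) +
        b n 1 * (E 0 + g n / b n 1)) :
    ∀ n, (hn : 1 ≤ n) → n ≤ M →
      E n ≤ E 0 + (Icc 1 n).sup' (Finset.nonempty_Icc.mpr hn)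
        (fun m => g m / b m 1) := by
  intro n
  induction n using Nat.strong_induction_on with
  | _ n ih =>
  intro hn hnM
  have hIco : Icc 1 (n - 1) = Ico 1 n := by
    rw [← Ico_add_one_right_eq_Icc, Nat.sub_add_cancel hn]
  have htotal : ∑ k ∈ Ico 1 n, (b n (k + 1) - b n k) + b n 1 = b n n := by
    rw [sum_Ico_sub (fun k => b n k) hn]; ring
  have hrecn := hrec n hn hnM
  rw [hIco, ← htotal] at hrecn
  refine le_of_mul_le_sum_mul_add_mul (fun k hk => ?_) (hbpos n hn hnM) (fun k hk => ?_) ?_ hrecn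
  · exact sub_nonneg.mpr
      (le_add_one_of_mem_Ico_of_lt_of_le_last (hbinc n hn hnM) (hbdiag n · hnM) k hk)
  · obtain ⟨hk1, hkn⟩ := mem_Ico.mp hk
    grw [ih k hkn hk1 (by omega), sup'_mono _ (Icc_subset_Icc_right hkn.le)]
  · grw [le_sup' (fun m => g m / b m 1) (right_mem_Icc.mpr hn)]

/-- Fast-scheme stability: if `b_n^{(n)} E_n ≤ Σ_{k=1}^{n-1}(b_{k+1}^{(n)} −
b_k^{(n)}) E_k + b_1^{(n)}(E_0 + g_n/b_1^{(n)})` with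
`0 < b_1^{(n)} < ⋯ < b_{n-1}^{(n)} ≤ b_n^{(n)}`, then
`E_n ≤ E_0 + max_{1≤m≤n} g_m/b_1^{(m)}`. -/
theorem fast_discrete_stability
    (M : ℕ) (hM : 1 ≤ M) (E g : ℕ → ℝ) (b : ℕ → ℕ → ℝ)
    (hE : ∀ n, n ≤ M → 0 ≤ E n) (hg : ∀ n, 1 ≤ n → n ≤ M → 0 ≤ g n)
    (hbpos : ∀ n, 1 ≤ n → n ≤ M → 0 < b n 1)
    (hbinc : ∀ n, 1 ≤ n → n ≤ M → ∀ k, 1 ≤ k → k + 1 ≤ n - 1 →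
      b n k < b n (k + 1))
    (hbdiag : ∀ n, 2 ≤ n → n ≤ M → b n (n - 1) ≤ b n n)
    (hrec : ∀ n, 1 ≤ n → n ≤ M →
      b n n * E n ≤ (∑ k ∈ Icc 1 (n - 1), (b n (k + 1) - b n k) * E k) +
        b n 1 * (E 0 + g n / b n 1)) :
    ∀ n, (hn : 1 ≤ n) → n ≤ M →
      E n ≤ E 0 + (Icc 1 n).sup' (Finset.nonempty_Icc.mpr hn)
        (fun m => g m / b m 1) :=
  fast_discrete_stability_general M E g b hbpos hbinc hbdiag hrec
end
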